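/- arXiv:1911.11992 — 6 statements merged into one kernel-verified Lean document; each statement's English description precedes it below -/
import Mathlib

section
/- Let u : ℝ^d → ℂ be a nonzero continuous positive definite function with u(x) → 0 as |x| → ∞. Then for every a ∈ ℝ^d and every sequence (x_n) in ℝ^d, if Re(u(x_n − a)) → Re(u(0)) as n → ∞, then x_n → a. In particular, if a, b ∈ ℝ^d satisfy Re(u(a − b)) = Re(u(0)), then a = b (injectivity of the feature map x ↦ u(· − x), with continuous inverse on its image). -/
open MeasureTheory Filter
open scoped Real ComplexOrder

noncomputable section

namespace Paper

/-- The character `e^{2π i x·ξ}` for `x, ξ ∈ ℝ^d`. -/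
def char {d : ℕ} (x ξ : EuclideanSpace ℝ (Fin d)) : ℂ :=
  Complex.exp (2 * Real.pi * Complex.I * ((∑ j, x j * ξ j : ℝ) : ℂ))

/-- Membership in `L²(û⁻¹)`: measurable, vanishing a.e. on `{û = 0}`, with
`∫ |g|² û⁻¹ < ∞`. -/
def MemL2inv {d : ℕ} (uhat : EuclideanSpace ℝ (Fin d) → ℝ)
    (g : EuclideanSpace ℝ (Fin d) → ℂ) : Prop :=
  Measurable g ∧ (∀ᵐ ξ ∂volume, uhat ξ = 0 → g ξ = 0) ∧
    Integrable (fun ξ => ‖g ξ‖ ^ 2 * (uhat ξ)⁻¹)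

/-- The norm `‖g‖_{L²(û⁻¹)}`. -/
def nrmInv {d : ℕ} (uhat : EuclideanSpace ℝ (Fin d) → ℝ)
    (g : EuclideanSpace ℝ (Fin d) → ℂ) : ℝ :=
  Real.sqrt (∫ ξ, ‖g ξ‖ ^ 2 * (uhat ξ)⁻¹)

/-- `h_g(x) = ∫ g(ξ) e^{2πi x·ξ} dξ`. -/
def hFun {d : ℕ} (g : EuclideanSpace ℝ (Fin d) → ℂ) (x : EuclideanSpace ℝ (Fin d)) : ℂ :=
  ∫ ξ, g ξ * char x ξ

/-- The composition operator `C_f` (for the RKHS associated with `û`) is everywhere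
defined with bound `M`, on the set `S`. -/
def BddCompOp {d : ℕ} (uhat : EuclideanSpace ℝ (Fin d) → ℝ)
    (S : Set (EuclideanSpace ℝ (Fin d)))
    (f : EuclideanSpace ℝ (Fin d) → EuclideanSpace ℝ (Fin d)) (M : ℝ) : Prop :=
  ∀ g, MemL2inv uhat g → ∃ g', MemL2inv uhat g' ∧ (∀ x ∈ S, hFun g' x = hFun g (f x)) ∧
    nrmInv uhat g' ≤ M * nrmInv uhat g

/-- Matrix acting on Euclidean space. -/
def mulVecE {d : ℕ} (A : Matrix (Fin d) (Fin d) ℝ) (x : EuclideanSpace ℝ (Fin d)) :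
    EuclideanSpace ℝ (Fin d) :=
  (EuclideanSpace.equiv (Fin d) ℝ).symm (A.mulVec (EuclideanSpace.equiv (Fin d) ℝ x))

/-- Membership in `G(u)`: invertible `A` with `û(Aᵀ ξ) ≥ λ û(ξ)` a.e. for some `λ > 0`. -/
def memG {d : ℕ} (uhat : EuclideanSpace ℝ (Fin d) → ℝ) (A : Matrix (Fin d) (Fin d) ℝ) : Prop :=
  IsUnit A ∧ ∃ lam > (0:ℝ), ∀ᵐ ξ ∂volume, lam * uhat ξ ≤ uhat (mulVecE A.transpose ξ)

/-- Condition (A): `û` decays faster than every exponential. -/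
def CondA {d : ℕ} (uhat : EuclideanSpace ℝ (Fin d) → ℝ) : Prop :=
  ∀ a > (0:ℝ), ∃ c > (0:ℝ), ∀ᵐ ξ ∂volume, uhat ξ ≤ c * Real.exp (-a * ‖ξ‖)

/-- The norm `‖h‖_{L²(û)}`. -/
def nrmHat {d : ℕ} (uhat : EuclideanSpace ℝ (Fin d) → ℝ)
    (h : EuclideanSpace ℝ (Fin d) → ℂ) : ℝ :=
  Real.sqrt (∫ ξ, ‖h ξ‖ ^ 2 * uhat ξ)

/-- Evaluation of a `d`-variable complex polynomial at a real point. -/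
def evalP {d : ℕ} (P : MvPolynomial (Fin d) ℂ) (ξ : EuclideanSpace ℝ (Fin d)) : ℂ :=
  MvPolynomial.eval (fun j => ((ξ j : ℝ) : ℂ)) P

/-- `(m_z P)(ξ) = e^{-2πi z·ξ} P(ξ)`. -/
def mzP {d : ℕ} (z : Fin d → ℂ) (P : MvPolynomial (Fin d) ℂ)
    (ξ : EuclideanSpace ℝ (Fin d)) : ℂ :=
  Complex.exp (-(2 * Real.pi * Complex.I) * ∑ j, z j * ((ξ j : ℝ) : ℂ)) * evalP P ξ

/-- Condition (B): `sup_z limsup_n (sup ratio)^{1/n} < ∞`. -/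
def CondB {d : ℕ} (uhat : EuclideanSpace ℝ (Fin d) → ℝ) : Prop :=
  ∃ C : ℝ, ∀ z : Fin d → ℂ,
    Filter.limsup (fun n : ℕ =>
      (sSup {r : ℝ | ∃ P : MvPolynomial (Fin d) ℂ, P ≠ 0 ∧ P.totalDegree ≤ n ∧
        r = nrmHat uhat (mzP z P) / nrmHat uhat (evalP P)}) ^ ((n : ℝ)⁻¹))
      Filter.atTop ≤ C

/-- The embedding `ℝ^d ⊆ ℂ^d`. -/
def RtoC {d : ℕ} (x : EuclideanSpace ℝ (Fin d)) : EuclideanSpace ℂ (Fin d) :=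
  WithLp.toLp 2 (fun j => ((x j : ℝ) : ℂ))

/-- The imaginary part `Im z ∈ ℝ^d` of `z ∈ ℂ^d`. -/
def imVec {d : ℕ} (z : EuclideanSpace ℂ (Fin d)) : EuclideanSpace ℝ (Fin d) :=
  WithLp.toLp 2 (fun j => (z j).im)

/-- A function `u : ℝ^d → ℂ` is positive definite. -/
def IsPosDefFn {d : ℕ} (u : EuclideanSpace ℝ (Fin d) → ℂ) : Prop :=
  ∀ (m : ℕ) (p : Fin m → EuclideanSpace ℝ (Fin d)) (c : Fin m → ℂ),
    0 ≤ ∑ i, ∑ j, (starRingEnd ℂ) (c i) * c j * u (p i - p j)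

/-!
A positive definite `u` satisfies Krein's inequality
`‖u x - u y‖² ≤ 2 Re u(0) (Re u(0) - Re u(x - y))`, read off from the quadratic form at the
three points `0, x, y`. Hence `Re u(z) = Re u(0)` makes `z` a period of `u`; a nonzero period
would keep `u(n • z) = u(0) ≠ 0` along a sequence escaping to infinity. So `Re u(0) - Re u`
vanishes only at `0` and stays away from `0` near infinity, and by compactness `Re u(yₙ) → Re u(0)`
forces `yₙ → 0`.
-/

theorem _root_.Continuous.tendsto_nhds_of_tendsto_comp_nhds_zero {X ι : Type*} [TopologicalSpace X]
    {f : X → ℝ} (hf : Continuous f) {x₀ : X} (hzero : ∀ x, f x = 0 → x = x₀) {δ : ℝ}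
    (hδ : 0 < δ) (hfar : ∀ᶠ x in cocompact X, δ ≤ f x) {l : Filter ι} {y : ι → X}
    (hy : Tendsto (f ∘ y) l (nhds 0)) : Tendsto y l (nhds x₀) := by
  obtain ⟨K, hK, hKfar⟩ := mem_cocompact.mp hfar
  have hyK : ∀ᶠ i in l, y i ∈ K := by
    filter_upwards [hy.eventually (gt_mem_nhds hδ)] with i hi
    by_contra hiK
    exact (hKfar hiK).not_gt hi
  refine hK.tendsto_nhds_of_unique_mapClusterPt hyK fun p _ hp => hzero p ?_
  exact eq_of_nhds_neBot ((hp.continuousAt_comp hf.continuousAt).clusterPt.mono hy)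

namespace IsPosDefFn

variable {d : ℕ} {u : EuclideanSpace ℝ (Fin d) → ℂ}

theorem zero_nonneg (hu : IsPosDefFn u) : 0 ≤ u 0 := by
  simpa using hu 1 (fun _ => 0) (fun _ => 1)

theorem im_zero (hu : IsPosDefFn u) : (u 0).im = 0 :=
  (Complex.le_def.mp hu.zero_nonneg).2.symm

theorem map_neg (hu : IsPosDefFn u) (x : EuclideanSpace ℝ (Fin d)) :
    u (-x) = starRingEnd ℂ (u x) := by
  have h1 := hu 2 ![0, x] ![1, 1]
  have h2 := hu 2 ![0, x] ![1, Complex.I]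
  simp only [Fin.sum_univ_two, Matrix.cons_val_zero, Matrix.cons_val_one, sub_self, zero_sub,
    sub_zero, map_one, one_mul, mul_one, Complex.conj_I] at h1 h2
  have e1 := (Complex.le_def.mp h1).2
  have e2 := (Complex.le_def.mp h2).2
  simp only [Complex.zero_im, Complex.add_im, hu.im_zero, zero_add, add_zero, neg_mul,
    Complex.I_mul_I, neg_neg, one_mul, Complex.mul_im, Complex.I_re, zero_mul, Complex.I_im,
    Complex.neg_im] at e1 e2
  apply Complex.ext <;> simp only [Complex.conj_re, Complex.conj_im] <;> linarith

theorem two_point (hu : IsPosDefFn u) (x : EuclideanSpace ℝ (Fin d)) (c : ℂ) :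
    0 ≤ (1 + ‖c‖ ^ 2) * (u 0).re + 2 * (c * starRingEnd ℂ (u x)).re := by
  have h := (Complex.le_def.mp (hu 2 ![0, x] ![1, c])).1
  simp only [Fin.sum_univ_two, Matrix.cons_val_zero, Matrix.cons_val_one, Matrix.cons_val_fin_one,
    sub_self, sub_zero, zero_sub, hu.map_neg, map_one, one_mul, mul_one, Complex.add_re,
    Complex.mul_re, Complex.conj_re, Complex.conj_im, Complex.zero_re, hu.im_zero,
    ← Complex.normSq_eq_norm_sq, Complex.normSq_apply] at h ⊢
  linarith

theorem norm_le (hu : IsPosDefFn u) (x : EuclideanSpace ℝ (Fin d)) : ‖u x‖ ≤ (u 0).re := by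
  rcases eq_or_ne (u x) 0 with hx | hx
  · simpa [hx] using (Complex.le_def.mp hu.zero_nonneg).1
  have hpos : 0 < ‖u x‖ := norm_pos_iff.mpr hx
  have h := hu.two_point x (-(‖u x‖ : ℂ)⁻¹ * u x)
  have hc : ‖-(‖u x‖ : ℂ)⁻¹ * u x‖ = 1 := by
    simp [hpos.ne']
  have hcross : (-(‖u x‖ : ℂ)⁻¹ * u x * starRingEnd ℂ (u x)).re = -‖u x‖ := by
    rw [mul_assoc, Complex.mul_conj, Complex.normSq_eq_norm_sq]
    field_simp
    norm_cast
    rw [sq, mul_div_assoc, div_self hpos.ne', mul_one]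
  rw [hc, hcross] at h
  linarith

theorem re_zero_pos (hu : IsPosDefFn u) (hu_ne : u ≠ 0) : 0 < (u 0).re := by
  obtain ⟨x, hx⟩ := Function.ne_iff.mp hu_ne
  exact (norm_pos_iff.mpr hx).trans_le (hu.norm_le x)

theorem three_point (hu : IsPosDefFn u) (x y : EuclideanSpace ℝ (Fin d)) (s : ℝ) :
    0 ≤ (s ^ 2 + 2 * ‖u x - u y‖ ^ 2) * (u 0).re - 2 * s * ‖u x - u y‖ ^ 2
      - 2 * ‖u x - u y‖ ^ 2 * (u (x - y)).re := by
  have hyx : u (y - x) = starRingEnd ℂ (u (x - y)) := by rw [← neg_sub x y, hu.map_neg]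
  have h := (Complex.le_def.mp (hu 3 ![0, x, y] ![(s : ℂ), -(u x - u y), u x - u y])).1
  simp only [Complex.zero_re, neg_sub, Fin.sum_univ_three, Fin.isValue, Matrix.cons_val_zero,
    sub_zero, Matrix.cons_val_one, Matrix.cons_val, Complex.conj_ofReal, zero_sub, hu.map_neg,
    map_sub, sub_self, hyx, Complex.add_re, Complex.mul_re, Complex.ofReal_re, Complex.ofReal_im,
    mul_zero, Complex.mul_im, zero_mul, add_zero, Complex.sub_re, Complex.sub_im,
    Complex.conj_re, Complex.conj_im, mul_neg, sub_neg_eq_add, zero_add, hu.im_zero, ← Complex.normSq_eq_norm_sq, Complex.normSq_apply] at h ⊢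
  linarith

theorem norm_sub_sq_le (hu : IsPosDefFn u) (x y : EuclideanSpace ℝ (Fin d)) :
    ‖u x - u y‖ ^ 2 ≤ 2 * (u 0).re * ((u 0).re - (u (x - y)).re) := by
  set n := ‖u x - u y‖ ^ 2
  set r := (u 0).re
  set ρ := (u (x - y)).re
  have hdisc := discrim_le_zero (a := r) (b := -2 * n) (c := 2 * n * (r - ρ)) fun s => by
    linarith [hu.three_point x y s]
  rw [discrim] at hdisc
  have hρ : ρ ≤ r := (Complex.re_le_norm _).trans (hu.norm_le _)
  have hr : 0 ≤ r := (norm_nonneg _).trans (hu.norm_le 0)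
  have hn : 0 ≤ n := by positivity
  nlinarith [mul_nonneg hr (sub_nonneg.mpr hρ)]

theorem apply_add_of_re_eq (hu : IsPosDefFn u) {z : EuclideanSpace ℝ (Fin d)}
    (hz : (u z).re = (u 0).re) (x : EuclideanSpace ℝ (Fin d)) : u (x + z) = u x := by
  have h := hu.norm_sub_sq_le (x + z) x
  rw [add_sub_cancel_left, hz, sub_self, mul_zero] at h
  exact sub_eq_zero.mp (norm_eq_zero.mp (pow_eq_zero_iff two_ne_zero |>.mp
    (le_antisymm h (by positivity))))

theorem eq_zero_of_re_eq (hu : IsPosDefFn u) (hu_ne : u ≠ 0)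
    (hu_zero : Tendsto u (cocompact (EuclideanSpace ℝ (Fin d))) (nhds 0))
    {z : EuclideanSpace ℝ (Fin d)} (hz : (u z).re = (u 0).re) : z = 0 := by
  by_contra hz0
  have hmul : ∀ n : ℕ, u (n • z) = u 0 := by
    intro n
    induction n with
    | zero => simp
    | succ k ih => rw [succ_nsmul, hu.apply_add_of_re_eq hz, ih]
  have hescape : Tendsto (fun n : ℕ => n • z) atTop (cocompact (EuclideanSpace ℝ (Fin d))) := by
    rw [← Metric.cobounded_eq_cocompact, ← tendsto_norm_atTop_iff_cobounded]
    simp only [← Nat.cast_smul_eq_nsmul ℝ, norm_smul, Real.norm_natCast]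
    exact tendsto_natCast_atTop_atTop.atTop_mul_const (norm_pos_iff.mpr hz0)
  have hconst : Tendsto (fun _ : ℕ => u 0) atTop (nhds 0) := by
    simpa [Function.comp_def, hmul] using hu_zero.comp hescape
  have hu0 : u 0 = 0 := tendsto_nhds_unique tendsto_const_nhds hconst
  simpa [hu0] using hu.re_zero_pos hu_ne

end IsPosDefFn

theorem statement3_general {d : ℕ}
    (u : EuclideanSpace ℝ (Fin d) → ℂ)
    (hu_cont : Continuous u) (hu_ne : u ≠ 0) (hu_pd : IsPosDefFn u)
    (hu_zero : Tendsto u (cocompact (EuclideanSpace ℝ (Fin d))) (nhds 0)) :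
    (∀ (a : EuclideanSpace ℝ (Fin d)) (x : ℕ → EuclideanSpace ℝ (Fin d)),
      Tendsto (fun n => (u (x n - a)).re) atTop (nhds (u 0).re) →
      Tendsto x atTop (nhds a)) ∧
    (∀ a b : EuclideanSpace ℝ (Fin d), (u (a - b)).re = (u 0).re → a = b) := by
  set f : EuclideanSpace ℝ (Fin d) → ℝ := fun y => (u 0).re - (u y).re
  have hf_cont : Continuous f := continuous_const.sub (Complex.continuous_re.comp hu_cont)
  have hf_zero : ∀ y, f y = 0 → y = 0 := fun y hy => hu_pd.eq_zero_of_re_eq hu_ne hu_zero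
    (sub_eq_zero.mp hy).symm
  have hr : 0 < (u 0).re := hu_pd.re_zero_pos hu_ne
  have hf_far : ∀ᶠ y in cocompact _, (u 0).re / 2 ≤ f y := by
    have hre : Tendsto (fun y => (u y).re) (cocompact _) (nhds 0) := by
      simpa [Function.comp_def] using (Complex.continuous_re.tendsto 0).comp hu_zero
    filter_upwards [hre.eventually (ge_mem_nhds (half_pos hr))] with y hy
    linarith
  refine ⟨fun a x hx => ?_, fun a b hab => sub_eq_zero.mp (hf_zero _ (sub_eq_zero.mpr hab.symm))⟩
  have hfx := hx.const_sub (u 0).re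
  rw [sub_self] at hfx
  exact tendsto_sub_nhds_zero_iff.mp
    (hf_cont.tendsto_nhds_of_tendsto_comp_nhds_zero hf_zero (half_pos hr) hf_far hfx)

/-- for a nonzero continuous positive definite `u` vanishing at infinity,
`Re u(xₙ - a) → Re u(0)` forces `xₙ → a`; in particular `Re u(a - b) = Re u(0)`
forces `a = b`. -/
theorem statement3 {d : ℕ} (hd : 1 ≤ d)
    (u : EuclideanSpace ℝ (Fin d) → ℂ)
    (hu_cont : Continuous u) (hu_ne : u ≠ 0) (hu_pd : IsPosDefFn u)
    (hu_zero : Tendsto u (cocompact (EuclideanSpace ℝ (Fin d))) (nhds 0)) :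
    (∀ (a : EuclideanSpace ℝ (Fin d)) (x : ℕ → EuclideanSpace ℝ (Fin d)),
      Tendsto (fun n => (u (x n - a)).re) atTop (nhds (u 0).re) →
      Tendsto x atTop (nhds a)) ∧
    (∀ a b : EuclideanSpace ℝ (Fin d), (u (a - b)).re = (u 0).re → a = b) :=
  statement3_general u hu_cont hu_ne hu_pd hu_zero
end Paper
end
end

section
/- Let a > 0 and c > 0, and let û : ℝ^d → ℝ be measurable with 0 ≤ û(ξ) ≤ c e^{−4πa|ξ|} for a.e. ξ. Let g : ℝ^d → ℂ be measurable with g = 0 a.e. on {û = 0} and ∫ |g(ξ)|² û(ξ)⁻¹ dξ < ∞ (so g is integrable). If ∫ g(ξ) e^{2πi x·ξ} dξ = 0 for every x in some nonempty open set U ⊆ ℝ^d, then g = 0 a.e. (Equivalently, the elements k(·, x) with x ∈ U span a dense subspace of the RKHS H_k: H_{k,U} = H_k.) -/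
open MeasureTheory Filter
open scoped Real ComplexOrder

noncomputable section

/-! The decay of `û` and Cauchy–Schwarz against the weight `û` make `|g(ξ)| e^{s|ξ|}` integrable
for every `s < 2πa`. Hence, for `x₀ ∈ U` and any direction `v`, the function
`t ↦ ∫ g(ξ) e^{2πi (x₀ + t v)·ξ} dξ` extends holomorphically to a strip around `ℝ`; it vanishes
for small real `t`, so by the identity theorem it vanishes at `t = 1`. Thus the inverse Fourier
transform of the integrable function `g` vanishes identically, and pairing `g` with the Fourier
transforms of test functions shows `g = 0` a.e. -/

open Complex Topology
open scoped RealInnerProductSpace FourierTransform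

theorem integrable_exp_neg_mul_norm {E : Type*} [NormedAddCommGroup E] [NormedSpace ℝ E]
    [FiniteDimensional ℝ E] [MeasurableSpace E] [BorelSpace E] (μ : Measure E)
    [μ.IsAddHaarMeasure] {b : ℝ} (hb : 0 < b) :
    Integrable (fun x => Real.exp (-b * ‖x‖)) μ := by
  -- `e^{-b t} ≤ e^b n! b⁻ⁿ (1 + t)⁻ⁿ` by the exponential series, with `n > dim E`
  set n := Module.finrank ℝ E + 1
  have hn : (Module.finrank ℝ E : ℝ) < n := by simp [n]
  refine ((integrable_one_add_norm hn).const_mul (Real.exp b * n.factorial / b ^ n)).mono'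
    (by fun_prop) (.of_forall fun x => ?_)
  have key := Real.pow_div_factorial_le_exp (x := b * (1 + ‖x‖)) (by positivity) n
  rw [Real.norm_of_nonneg (Real.exp_pos _).le, Real.rpow_neg (by positivity), Real.rpow_natCast]
  rw [div_le_iff₀ (by positivity), mul_pow, mul_one_add, Real.exp_add] at key
  rw [show -b * ‖x‖ = -(b * ‖x‖) by ring, Real.exp_neg]
  field_simp
  linarith

section
variable {α : Type*} [MeasurableSpace α] {μ : Measure α}

theorem integrable_norm_mul_of_integrable_sq_mul_inv {E : Type*} [NormedAddCommGroup E]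
    {g : α → E} {u w h : α → ℝ} (hg : AEStronglyMeasurable g μ) (hw : AEStronglyMeasurable w μ)
    (hgu : Integrable (fun x => ‖g x‖ ^ 2 * (u x)⁻¹) μ) (hh : Integrable h μ)
    (hu : ∀ᵐ x ∂μ, 0 ≤ u x) (hgu0 : ∀ᵐ x ∂μ, u x = 0 → g x = 0)
    (huw : ∀ᵐ x ∂μ, u x * w x ^ 2 ≤ h x) :
    Integrable (fun x => ‖g x‖ * w x) μ := by
  refine ((hgu.add hh).div_const 2).mono' (hg.norm.mul hw) ?_
  filter_upwards [hu, hgu0, huw] with x hux hgx hwx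
  rw [norm_mul, norm_norm, Real.norm_eq_abs]
  rcases hux.eq_or_lt with hux | hux
  · rw [← hux, zero_mul] at hwx
    simp only [hgx hux.symm, norm_zero, zero_mul, Pi.add_apply]
    positivity
  · have amgm : 2 * (‖g x‖ * |w x|) ≤ ‖g x‖ ^ 2 * (u x)⁻¹ + u x * w x ^ 2 := by
      rw [← sq_abs (w x)]
      field_simp
      nlinarith [sq_nonneg (‖g x‖ - u x * |w x|)]
    simp only [Pi.add_apply]
    linarith

theorem norm_cexp_mul_ofReal_mul_I_le (t : ℂ) (y : ℝ) :
    ‖cexp (t * y * I)‖ ≤ Real.exp (|t.im| * |y|) := by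
  rw [Complex.norm_exp, ← abs_mul]
  gcongr
  simpa using neg_le_abs (t.im * y)

theorem hasDerivAt_integral_mul_cexp_mul_I {f : α → ℂ} {ψ : α → ℝ}
    (hf : AEStronglyMeasurable f μ) (hψ : AEStronglyMeasurable ψ μ) {δ : ℝ}
    (hint : Integrable (fun x => ‖f x‖ * Real.exp (δ * |ψ x|)) μ) {t₀ : ℂ} (ht₀ : |t₀.im| < δ) :
    HasDerivAt (fun t : ℂ => ∫ x, f x * cexp (t * ψ x * I) ∂μ)
      (∫ x, f x * (cexp (t₀ * ψ x * I) * (ψ x * I)) ∂μ) t₀ := by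
  obtain ⟨r, ht₀r, hrδ⟩ := exists_between ht₀
  have hmeas : ∀ t : ℂ, AEStronglyMeasurable (fun x => f x * cexp (t * ψ x * I)) μ := by
    intro t; fun_prop
  have hexp_le : ∀ t : ℂ, |t.im| ≤ r → ∀ x, ‖cexp (t * ψ x * I)‖ ≤ Real.exp (r * |ψ x|) :=
    fun t ht x => (norm_cexp_mul_ofReal_mul_I_le t (ψ x)).trans (by gcongr)
  have hnhds : {t : ℂ | |t.im| < r} ∈ 𝓝 t₀ :=
    (isOpen_lt (continuous_abs.comp continuous_im) continuous_const).mem_nhds ht₀r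
  have hpoly_exp : ∀ y : ℝ, 0 ≤ y → Real.exp (r * y) * y ≤ (δ - r)⁻¹ * Real.exp (δ * y) := by
    intro y hy
    have := Real.add_one_le_exp ((δ - r) * y)
    rw [le_inv_mul_iff₀ (sub_pos.2 hrδ), show δ * y = r * y + (δ - r) * y by ring, Real.exp_add]
    nlinarith [Real.exp_pos (r * y)]
  refine (hasDerivAt_integral_of_dominated_loc_of_deriv_le hnhds (.of_forall fun t => hmeas t)
    ?_ (F' := fun t x => f x * (cexp (t * ψ x * I) * (ψ x * I))) (by fun_prop)
    (.of_forall fun x t ht => ?_) (hint.const_mul (δ - r)⁻¹) (.of_forall fun x t _ => ?_)).2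
  · refine hint.mono' (hmeas t₀) (.of_forall fun x => ?_)
    rw [norm_mul]
    gcongr
    exact (hexp_le t₀ ht₀r.le x).trans (by gcongr)
  · rw [norm_mul, norm_mul, norm_mul, Complex.norm_I, mul_one, Complex.norm_real,
      Real.norm_eq_abs, mul_left_comm (δ - r)⁻¹]
    gcongr ‖f x‖ * ?_
    exact (mul_le_mul_of_nonneg_right (hexp_le t ht.le x) (abs_nonneg _)).trans
      (hpoly_exp _ (abs_nonneg _))
  · exact ((((hasDerivAt_id t).mul_const (ψ x : ℂ)).mul_const I).cexp.const_mul (f x)).congr_deriv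
      (by simp)

end

theorem isPreconnected_setOf_abs_im_lt (δ : ℝ) : IsPreconnected {t : ℂ | |t.im| < δ} := by
  have : {t : ℂ | |t.im| < δ} = imLm ⁻¹' Set.Ioo (-δ) δ := by
    ext t; simp [abs_lt]
  rw [this]
  exact ((convex_Ioo (-δ) δ).linear_preimage imLm).isPreconnected

theorem AnalyticOnNhd.eqOn_zero_of_eventually_ofReal_eq_zero {E : Type*} [NormedAddCommGroup E]
    [NormedSpace ℂ E] {F : ℂ → E} {S : Set ℂ} (hF : AnalyticOnNhd ℂ F S) (hS : IsPreconnected S)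
    {t₀ : ℝ} (ht₀ : (t₀ : ℂ) ∈ S) (hreal : ∀ᶠ t : ℝ in 𝓝 t₀, F t = 0) : Set.EqOn F 0 S := by
  refine hF.eqOn_zero_of_preconnected_of_frequently_eq_zero hS ht₀ ?_
  have hlim : Tendsto (fun t : ℝ => (t : ℂ)) (𝓝[≠] t₀) (𝓝[≠] (t₀ : ℂ)) :=
    continuous_ofReal.continuousWithinAt.tendsto_nhdsWithin fun t ht => by simpa using ht
  exact hlim.frequently (hreal.filter_mono nhdsWithin_le_nhds).frequently

theorem MeasureTheory.Integrable.ae_eq_zero_of_fourierInv_eq_zero {V : Type*}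
    [NormedAddCommGroup V] [InnerProductSpace ℝ V] [FiniteDimensional ℝ V] [MeasurableSpace V]
    [BorelSpace V] {f : V → ℂ} (hf : Integrable f) (h : 𝓕⁻ f = 0) : f =ᵐ[volume] 0 := by
  refine ae_eq_zero_of_integral_contDiff_smul_eq_zero hf.locallyIntegrable fun φ hφ hφc => ?_
  set Φ : SchwartzMap V ℂ :=
    (hφc.comp_left ofReal_zero).toSchwartzMap (ofRealCLM.contDiff.comp hφ)
  have hΦ : ∀ x, (φ x : ℂ) = 𝓕⁻ (𝓕 (Φ : V → ℂ)) x := fun x =>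
    (congrFun (Φ.continuous.fourierInv_fourier_eq Φ.integrable
      (SchwartzMap.integrable (𝓕 Φ))) x).symm
  calc ∫ x, φ x • f x = ∫ x, 𝓕⁻ (𝓕 (Φ : V → ℂ)) x • f x := by
        simp_rw [← hΦ, Complex.real_smul, smul_eq_mul]
    _ = ∫ ξ, 𝓕 (Φ : V → ℂ) ξ • 𝓕⁻ f ξ := by
        have hflip : (-innerₗ V).flip = -innerₗ V := by
          ext x y
          simp [real_inner_comm]
        have := VectorFourier.integral_fourierIntegral_smul_eq_flip (L := -innerₗ V)
          (μ := volume) (ν := volume) Real.continuous_fourierChar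
          (by simp only [LinearMap.neg_apply, innerₗ_apply_apply]; fun_prop)
          (SchwartzMap.integrable (𝓕 Φ)) hf
        rwa [hflip] at this
    _ = 0 := by simp [h]

namespace Paper

theorem MemL2inv.integrable_norm_mul_exp {d : ℕ} {uhat : EuclideanSpace ℝ (Fin d) → ℝ}
    {g : EuclideanSpace ℝ (Fin d) → ℂ} (hg : MemL2inv uhat g) {b c s : ℝ}
    (hbd : ∀ᵐ ξ ∂volume, 0 ≤ uhat ξ ∧ uhat ξ ≤ c * Real.exp (-b * ‖ξ‖)) (hs : 2 * s < b) :
    Integrable (fun ξ => ‖g ξ‖ * Real.exp (s * ‖ξ‖)) := by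
  obtain ⟨hgm, hg0, hgint⟩ := hg
  refine integrable_norm_mul_of_integrable_sq_mul_inv hgm.aestronglyMeasurable (by fun_prop)
    hgint ((integrable_exp_neg_mul_norm volume (sub_pos.2 hs)).const_mul c)
    (hbd.mono fun _ h => h.1) hg0 ?_
  filter_upwards [hbd] with ξ hξ
  calc uhat ξ * Real.exp (s * ‖ξ‖) ^ 2
      ≤ c * Real.exp (-b * ‖ξ‖) * Real.exp (s * ‖ξ‖) ^ 2 := by gcongr; exact hξ.2
    _ = c * Real.exp (-(b - 2 * s) * ‖ξ‖) := by
      rw [sq, mul_assoc, ← Real.exp_add, ← Real.exp_add]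
      ring_nf

theorem MemL2inv.integrable {d : ℕ} {uhat : EuclideanSpace ℝ (Fin d) → ℝ}
    {g : EuclideanSpace ℝ (Fin d) → ℂ} (hg : MemL2inv uhat g) {b c : ℝ}
    (hbd : ∀ᵐ ξ ∂volume, 0 ≤ uhat ξ ∧ uhat ξ ≤ c * Real.exp (-b * ‖ξ‖)) (hb : 0 < b) :
    Integrable g := by
  refine (integrable_norm_iff hg.1.aestronglyMeasurable).1 ?_
  simpa using hg.integrable_norm_mul_exp hbd (s := 0) (by simpa using hb)

theorem char_eq {d : ℕ} (x ξ : EuclideanSpace ℝ (Fin d)) :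
    char x ξ = cexp (↑(2 * π * ⟪ξ, x⟫) * I) := by
  simp only [char, PiLp.inner_apply, RCLike.inner_apply, conj_trivial]
  push_cast
  ring_nf

theorem integral_mul_char_eq_fourierInv {d : ℕ} (g : EuclideanSpace ℝ (Fin d) → ℂ)
    (x : EuclideanSpace ℝ (Fin d)) : ∫ ξ, g ξ * char x ξ = 𝓕⁻ g x := by
  simp_rw [Real.fourierInv_eq', char_eq, smul_eq_mul, mul_comm]

theorem continuous_char {d : ℕ} (x : EuclideanSpace ℝ (Fin d)) : Continuous (char x) := by
  unfold char
  fun_prop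

theorem norm_char {d : ℕ} (x ξ : EuclideanSpace ℝ (Fin d)) : ‖char x ξ‖ = 1 := by
  rw [char_eq, Complex.norm_exp_ofReal_mul_I]

theorem char_add_smul {d : ℕ} (x v ξ : EuclideanSpace ℝ (Fin d)) (t : ℝ) :
    char (x + t • v) ξ = char x ξ * cexp (t * ↑(2 * π * ⟪ξ, v⟫) * I) := by
  rw [char_eq, char_eq, ← Complex.exp_add, inner_add_right, real_inner_smul_right]
  push_cast
  ring_nf

theorem integral_mul_char_eq_zero_of_isOpen {d : ℕ} {g : EuclideanSpace ℝ (Fin d) → ℂ}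
    (hg : AEStronglyMeasurable g) {s : ℝ} (hs : 0 < s)
    (hint : Integrable (fun ξ => ‖g ξ‖ * Real.exp (s * ‖ξ‖)))
    {U : Set (EuclideanSpace ℝ (Fin d))} (hUo : IsOpen U) (hU : U.Nonempty)
    (hvanish : ∀ x ∈ U, ∫ ξ, g ξ * char x ξ = 0) (y : EuclideanSpace ℝ (Fin d)) :
    ∫ ξ, g ξ * char y ξ = 0 := by
  obtain ⟨x₀, hx₀⟩ := hU
  set v := y - x₀
  set ψ : EuclideanSpace ℝ (Fin d) → ℝ := fun ξ => 2 * π * ⟪ξ, v⟫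
  set δ := s / (2 * π * ‖v‖ + 1)
  have hδ : 0 < δ := by positivity
  set F : ℂ → ℂ := fun t => ∫ ξ, g ξ * char x₀ ξ * cexp (t * ψ ξ * I)
  have hline : ∀ (t : ℝ) ξ, g ξ * char x₀ ξ * cexp (t * ψ ξ * I) = g ξ * char (x₀ + t • v) ξ :=
    fun t ξ => by rw [char_add_smul, mul_assoc]
  have hint' : Integrable (fun ξ => ‖g ξ * char x₀ ξ‖ * Real.exp (δ * |ψ ξ|)) := by
    refine hint.mono' ((hg.mul (continuous_char x₀).aestronglyMeasurable).norm.mul (by fun_prop))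
      (.of_forall fun ξ => ?_)
    rw [norm_mul, norm_mul, norm_char, mul_one, norm_norm, Real.norm_of_nonneg (by positivity)]
    have hδψ : δ * |ψ ξ| ≤ s * ‖ξ‖ := by
      have := mul_le_mul_of_nonneg_left (abs_real_inner_le_norm ξ v)
        (by positivity : 0 ≤ s * (2 * π))
      rw [abs_mul, abs_of_pos Real.two_pi_pos, div_mul_eq_mul_div, div_le_iff₀ (by positivity)]
      nlinarith [mul_nonneg hs.le (norm_nonneg ξ)]
    exact mul_le_mul_of_nonneg_left (Real.exp_le_exp.2 hδψ) (norm_nonneg _)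
  have hF : AnalyticOnNhd ℂ F {t | |t.im| < δ} :=
    DifferentiableOn.analyticOnNhd (fun t ht => (hasDerivAt_integral_mul_cexp_mul_I
      (hg.mul (continuous_char x₀).aestronglyMeasurable) (by fun_prop) hint' ht
      ).differentiableAt.differentiableWithinAt)
      (isOpen_lt (continuous_abs.comp continuous_im) continuous_const)
  have hF0 : ∀ᶠ t : ℝ in 𝓝 0, F t = 0 := by
    have hlim : Tendsto (fun t : ℝ => x₀ + t • v) (𝓝 0) (𝓝 x₀) :=
      (continuous_const.add (continuous_id.smul continuous_const)).tendsto' 0 x₀ (by simp)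
    filter_upwards [hlim (hUo.mem_nhds hx₀)] with t ht
    simp_rw [F, hline]
    exact hvanish _ ht
  have h1 := hF.eqOn_zero_of_eventually_ofReal_eq_zero (isPreconnected_setOf_abs_im_lt δ)
    (by simpa using hδ) hF0 (show ((1 : ℝ) : ℂ) ∈ {t : ℂ | |t.im| < δ} by simpa using hδ)
  have hy : x₀ + (1 : ℝ) • v = y := by simp [v]
  simpa only [F, hline, hy, Pi.zero_apply] using h1

theorem statement5_general {d : ℕ} (a c : ℝ) (ha : 0 < a)
    (uhat : EuclideanSpace ℝ (Fin d) → ℝ)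
    (huhat_bd : ∀ᵐ ξ ∂volume, 0 ≤ uhat ξ ∧ uhat ξ ≤ c * Real.exp (-(4 * Real.pi * a) * ‖ξ‖))
    (g : EuclideanSpace ℝ (Fin d) → ℂ) (hg : MemL2inv uhat g)
    (U : Set (EuclideanSpace ℝ (Fin d))) (hU : U.Nonempty) (hUo : IsOpen U)
    (hvanish : ∀ x ∈ U, (∫ ξ, g ξ * char x ξ) = 0) :
    g =ᵐ[volume] 0 := by
  have hint := hg.integrable_norm_mul_exp huhat_bd (s := π * a) (by nlinarith [Real.pi_pos])
  refine (hg.integrable huhat_bd (by positivity)).ae_eq_zero_of_fourierInv_eq_zero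
    (funext fun y => ?_)
  rw [Pi.zero_apply, ← integral_mul_char_eq_fourierInv]
  exact integral_mul_char_eq_zero_of_isOpen hg.1.aestronglyMeasurable (by positivity) hint hUo hU
    hvanish y

/-- if `û` decays like `c e^{-4πa|ξ|}`, `g ∈ L²(û⁻¹)` and the inverse
Fourier transform of `g` vanishes on a nonempty open set `U`, then `g = 0` a.e. -/
theorem statement5 {d : ℕ} (hd : 1 ≤ d) (a c : ℝ) (ha : 0 < a) (hc : 0 < c)
    (uhat : EuclideanSpace ℝ (Fin d) → ℝ) (huhat_meas : Measurable uhat)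
    (huhat_bd : ∀ᵐ ξ ∂volume, 0 ≤ uhat ξ ∧ uhat ξ ≤ c * Real.exp (-(4 * Real.pi * a) * ‖ξ‖))
    (g : EuclideanSpace ℝ (Fin d) → ℂ) (hg : MemL2inv uhat g)
    (U : Set (EuclideanSpace ℝ (Fin d))) (hU : U.Nonempty) (hUo : IsOpen U)
    (hvanish : ∀ x ∈ U, (∫ ξ, g ξ * char x ξ) = 0) :
    g =ᵐ[volume] 0 :=
  statement5_general a c ha uhat huhat_bd g hg U hU hUo hvanish

end Paper
end
end

section
/- Let a > 0 and c > 0, and let û : ℝ^d → ℝ be measurable with 0 ≤ û(ξ) ≤ c e^{−4πa|ξ|} for a.e. ξ. Let μ_û be Lebesgue measure with density û. Then for every z ∈ ℂ^d with |Im z| < a, the function e_z : ξ ↦ e^{−2πi z·ξ} (with z·ξ = Σ_j z_j ξ_j) lies in L²(μ_û); the map Φ from the open set {z ∈ ℂ^d : |Im z| < a} to L²(μ_û) sending z to the class of e_z is holomorphic (ℂ-differentiable as a map into the complex Banach space L²(μ_û)); and for each j = 1, …, d, the partial derivative of Φ with respect to z_j at z is the class of ξ ↦ −2πi ξ_j e^{−2πi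 z·ξ}. -/
/-!
`|e_z(ξ)| ≤ exp (2π |Im z| |ξ|)`, and the decay `û(ξ) ≤ c e^{-4πa|ξ|}` makes every weight
`|ξ|^k e^{t|ξ|}` with `t < 2πa` square integrable for `μ_û`. The Taylor bound
`|e^w - 1 - w| ≤ |w|² e^{|w|}` bounds the remainder `e_{z+h} - e_z - Σ_j h_j ∂_j e_z` pointwise by
`‖h‖²` times such a weight, so the remainder is `O(‖h‖²)` in `L²(μ_û)`.
-/

open MeasureTheory Filter
open scoped Real ComplexOrder

noncomputable section

namespace Paper

/-- `e_z(ξ) = e^{-2πi z·ξ}` for `z ∈ ℂ^d`, `ξ ∈ ℝ^d`. -/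
def eC {d : ℕ} (z : EuclideanSpace ℂ (Fin d)) (ξ : EuclideanSpace ℝ (Fin d)) : ℂ :=
  Complex.exp (-(2 * Real.pi * Complex.I) * ∑ j, z j * ((ξ j : ℝ) : ℂ))

open scoped ENNReal

def L2ExpMoments {E : Type*} [Norm E] [MeasurableSpace E] (μ : Measure E) (a : ℝ) : Prop :=
  ∀ (k : ℕ) (t : ℝ), t < a → MemLp (fun x => ‖x‖ ^ k * Real.exp (t * ‖x‖)) 2 μ

section ExpWeights

variable {E : Type*} [NormedAddCommGroup E] [NormedSpace ℝ E] [FiniteDimensional ℝ E]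
  [MeasurableSpace E] [BorelSpace E] (μ : Measure E) [μ.IsAddHaarMeasure]

lemma integrable_norm_pow_mul_exp_neg_mul_norm (k : ℕ) {b : ℝ} (hb : 0 < b) :
    Integrable (fun x : E => ‖x‖ ^ k * Real.exp (-b * ‖x‖)) μ := by
  rcases subsingleton_or_nontrivial E with hE | hE
  · exact (Continuous.integrable_of_hasCompactSupport (by fun_prop)
      (HasCompactSupport.of_compactSpace _))
  rw [integrable_fun_norm_addHaar μ (f := fun y => y ^ k * Real.exp (-b * y))]
  refine (integrableOn_rpow_mul_exp_neg_mul_rpow (s := ((Module.finrank ℝ E - 1 + k : ℕ) : ℝ))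
    (neg_one_lt_zero.trans_le (Nat.cast_nonneg _)) one_pos hb).congr_fun (fun y hy => ?_)
    measurableSet_Ioi
  simp only [smul_eq_mul, Real.rpow_natCast, Real.rpow_one, pow_add, mul_assoc]

lemma l2ExpMoments_withDensity {ρ : E → ℝ} (hρ : Measurable ρ) {c s : ℝ}
    (hρ_bd : ∀ᵐ x ∂μ, 0 ≤ ρ x ∧ ρ x ≤ c * Real.exp (-(2 * s) * ‖x‖)) :
    L2ExpMoments (μ.withDensity fun x => ENNReal.ofReal (ρ x)) s := by
  intro k t ht
  have hG : Continuous fun x : E => ‖x‖ ^ k * Real.exp (t * ‖x‖) := by fun_prop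
  rw [memLp_two_iff_integrable_sq_norm hG.aestronglyMeasurable]
  refine (integrable_withDensity_iff_integrable_smul (f := fun x => (ρ x).toNNReal)
    hρ.real_toNNReal).2 <|
    ((integrable_norm_pow_mul_exp_neg_mul_norm μ (2 * k) (b := 2 * (s - t))
      (by linarith)).const_mul c).mono' (by fun_prop) ?_
  filter_upwards [hρ_bd] with x ⟨hρ0, hρx⟩
  have hexp : Real.exp (-(2 * s) * ‖x‖) * Real.exp (t * ‖x‖) ^ 2
      = Real.exp (-(2 * (s - t)) * ‖x‖) := by
    rw [sq, ← Real.exp_add, ← Real.exp_add]; ring_nf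
  calc ‖(ρ x).toNNReal • ‖‖x‖ ^ k * Real.exp (t * ‖x‖)‖ ^ 2‖
      = ρ x * (‖x‖ ^ k * Real.exp (t * ‖x‖)) ^ 2 := by
        rw [NNReal.smul_def, smul_eq_mul, Real.coe_toNNReal _ hρ0, norm_mul,
          Real.norm_of_nonneg hρ0, norm_pow, norm_norm, Real.norm_of_nonneg (by positivity)]
    _ ≤ c * Real.exp (-(2 * s) * ‖x‖) * (‖x‖ ^ k * Real.exp (t * ‖x‖)) ^ 2 := by gcongr
    _ = c * (‖x‖ ^ (2 * k) * Real.exp (-(2 * (s - t)) * ‖x‖)) := by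
        rw [← hexp]; ring

end ExpWeights

section Characters

variable {d : ℕ}

lemma imVec_add (z w : EuclideanSpace ℂ (Fin d)) : imVec (z + w) = imVec z + imVec w := rfl

lemma norm_imVec_le (z : EuclideanSpace ℂ (Fin d)) : ‖imVec z‖ ≤ ‖z‖ := by
  simp only [EuclideanSpace.norm_eq]
  gcongr with j
  exact Complex.abs_im_le_norm (z j)

lemma norm_RtoC (ξ : EuclideanSpace ℝ (Fin d)) : ‖RtoC ξ‖ = ‖ξ‖ := by
  simp [EuclideanSpace.norm_eq, RtoC]

lemma norm_sum_mul_ofReal_le (h : EuclideanSpace ℂ (Fin d)) (ξ : EuclideanSpace ℝ (Fin d)) :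
    ‖∑ j, h j * ((ξ j : ℝ) : ℂ)‖ ≤ ‖h‖ * ‖ξ‖ := by
  have : ∑ j, h j * ((ξ j : ℝ) : ℂ) = inner ℂ (RtoC ξ) h := by
    simp [PiLp.inner_apply, RtoC]
  rw [this, ← norm_RtoC, mul_comm]
  exact norm_inner_le_norm _ _

lemma norm_eC (z : EuclideanSpace ℂ (Fin d)) (ξ : EuclideanSpace ℝ (Fin d)) :
    ‖eC z ξ‖ = Real.exp (2 * π * inner ℝ (imVec z) ξ) := by
  simp [eC, Complex.norm_exp, PiLp.inner_apply, imVec, Complex.mul_re, Finset.mul_sum,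
    mul_comm]

lemma norm_eC_le (z : EuclideanSpace ℂ (Fin d)) (ξ : EuclideanSpace ℝ (Fin d)) :
    ‖eC z ξ‖ ≤ Real.exp (2 * π * ‖imVec z‖ * ‖ξ‖) := by
  rw [norm_eC, mul_assoc _ ‖imVec z‖]
  gcongr
  exact real_inner_le_norm (imVec z) ξ

@[fun_prop]
lemma continuous_eC (z : EuclideanSpace ℂ (Fin d)) : Continuous (eC z) := by
  unfold eC; fun_prop

lemma eC_add (z h : EuclideanSpace ℂ (Fin d)) (ξ : EuclideanSpace ℝ (Fin d)) :
    eC (z + h) ξ =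
      eC z ξ * Complex.exp (-(2 * Real.pi * Complex.I) * ∑ j, h j * ((ξ j : ℝ) : ℂ)) := by
  simp only [eC, ← Complex.exp_add, PiLp.add_apply, add_mul, Finset.sum_add_distrib, mul_add]

def eCPartial (z : EuclideanSpace ℂ (Fin d)) (j : Fin d) (ξ : EuclideanSpace ℝ (Fin d)) : ℂ :=
  -(2 * Real.pi * Complex.I) * ((ξ j : ℝ) : ℂ) * eC z ξ

lemma norm_eCPartial_le (z : EuclideanSpace ℂ (Fin d)) (j : Fin d)
    (ξ : EuclideanSpace ℝ (Fin d)) :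
    ‖eCPartial z j ξ‖ ≤ 2 * π * (‖ξ‖ ^ 1 * Real.exp (2 * π * ‖imVec z‖ * ‖ξ‖)) := by
  have hj : |ξ j| ≤ ‖ξ‖ := by simpa using PiLp.norm_apply_le ξ j
  rw [eCPartial, norm_mul, norm_mul, pow_one, ← mul_assoc]
  simp only [norm_neg, norm_mul, Complex.norm_ofNat, Complex.norm_real, Real.norm_of_nonneg
    Real.pi_pos.le, Complex.norm_I, mul_one, Real.norm_eq_abs]
  gcongr
  exact norm_eC_le z ξ

lemma norm_eC_add_sub_sub_le (z h : EuclideanSpace ℂ (Fin d)) (ξ : EuclideanSpace ℝ (Fin d)) :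
    ‖eC (z + h) ξ - eC z ξ - ∑ j, h j * eCPartial z j ξ‖ ≤
      (2 * π * ‖h‖ * ‖ξ‖) ^ 2 * Real.exp (2 * π * (‖imVec z‖ + ‖h‖) * ‖ξ‖) := by
  set w : ℂ := -(2 * Real.pi * Complex.I) * ∑ j, h j * ((ξ j : ℝ) : ℂ)
  have hw : ‖w‖ ≤ 2 * π * ‖h‖ * ‖ξ‖ := by
    simp only [w, norm_mul, norm_neg, Complex.norm_ofNat, Complex.norm_real, Complex.norm_I,
      Real.norm_of_nonneg Real.pi_pos.le, mul_one, mul_assoc]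
    gcongr
    exact norm_sum_mul_ofReal_le h ξ
  have hsum : ∑ j, h j * eCPartial z j ξ = w * eC z ξ := by
    simp only [eCPartial, w, Finset.mul_sum, Finset.sum_mul]
    exact Finset.sum_congr rfl fun j _ => by ring
  have htaylor : ‖Complex.exp w - 1 - w‖ ≤ ‖w‖ ^ 2 * Real.exp ‖w‖ := by
    simpa [Finset.sum_range_succ, sub_sub] using Complex.norm_exp_sub_sum_le_norm_mul_exp w 2
  calc ‖eC (z + h) ξ - eC z ξ - ∑ j, h j * eCPartial z j ξ‖
      = ‖eC z ξ‖ * ‖Complex.exp w - 1 - w‖ := by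
        rw [show eC (z + h) ξ = eC z ξ * Complex.exp w from eC_add z h ξ, hsum, ← norm_mul]
        ring_nf
    _ ≤ Real.exp (2 * π * ‖imVec z‖ * ‖ξ‖) *
          ((2 * π * ‖h‖ * ‖ξ‖) ^ 2 * Real.exp (2 * π * ‖h‖ * ‖ξ‖)) := by
        gcongr
        · exact norm_eC_le z ξ
        · exact htaylor.trans (by gcongr)
    _ = (2 * π * ‖h‖ * ‖ξ‖) ^ 2 * Real.exp (2 * π * (‖imVec z‖ + ‖h‖) * ‖ξ‖) := by
        rw [mul_left_comm, ← Real.exp_add]; ring_nf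

end Characters

lemma hasFDerivAt_of_norm_sub_sub_le_sq {𝕜 E F : Type*} [NontriviallyNormedField 𝕜]
    [NormedAddCommGroup E] [NormedSpace 𝕜 E] [NormedAddCommGroup F] [NormedSpace 𝕜 F]
    {f : E → F} {f' : E →L[𝕜] F} {x : E} {C δ : ℝ} (hδ : 0 < δ)
    (hf : ∀ h, ‖h‖ < δ → ‖f (x + h) - f x - f' h‖ ≤ C * ‖h‖ ^ 2) : HasFDerivAt f f' x := by
  rw [hasFDerivAt_iff_isLittleO_nhds_zero]
  refine (Asymptotics.IsBigO.of_bound C ?_).trans_isLittleO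
    (Asymptotics.isLittleO_norm_pow_id one_lt_two)
  filter_upwards [Metric.ball_mem_nhds 0 hδ] with h hh
  simpa using hf h (mem_ball_zero_iff.1 hh)

open Classical in
def toLpOrZero {α E : Type*} [MeasurableSpace α] [NormedAddCommGroup E] (p : ℝ≥0∞)
    (μ : Measure α) (f : α → E) : Lp E p μ :=
  if hf : MemLp f p μ then hf.toLp f else 0

lemma coeFn_toLpOrZero {α E : Type*} [MeasurableSpace α] [NormedAddCommGroup E] {p : ℝ≥0∞}
    {μ : Measure α} {f : α → E} (hf : MemLp f p μ) : toLpOrZero p μ f =ᵐ[μ] f := by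
  rw [toLpOrZero, dif_pos hf]
  exact hf.coeFn_toLp

section Holomorphy

variable {d : ℕ} {μ : Measure (EuclideanSpace ℝ (Fin d))} {a : ℝ}
  {z : EuclideanSpace ℂ (Fin d)}

lemma memLp_eC (hμ : L2ExpMoments μ (2 * π * a)) (hz : ‖imVec z‖ < a) : MemLp (eC z) 2 μ := by
  refine (hμ 0 (2 * π * ‖imVec z‖) (by gcongr)).of_le (continuous_eC z).aestronglyMeasurable
    (.of_forall fun ξ => ?_)
  simpa [Real.norm_of_nonneg (Real.exp_pos _).le, mul_assoc] using norm_eC_le z ξ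

lemma memLp_eCPartial (hμ : L2ExpMoments μ (2 * π * a)) (hz : ‖imVec z‖ < a) (j : Fin d) :
    MemLp (eCPartial z j) 2 μ := by
  refine (hμ 1 (2 * π * ‖imVec z‖) (by gcongr)).of_le_mul (c := 2 * π)
    (by unfold eCPartial; fun_prop) (.of_forall fun ξ => ?_)
  simpa [Real.norm_of_nonneg (Real.exp_pos _).le, mul_assoc] using norm_eCPartial_le z j ξ

variable (μ) in
def eCLp (z : EuclideanSpace ℂ (Fin d)) : Lp ℂ 2 μ := toLpOrZero 2 μ (eC z)

lemma coeFn_eCLp (hμ : L2ExpMoments μ (2 * π * a)) (hz : ‖imVec z‖ < a) :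
    eCLp μ z =ᵐ[μ] eC z :=
  coeFn_toLpOrZero (memLp_eC hμ hz)

variable (μ) in
def eCDerivLp (z : EuclideanSpace ℂ (Fin d)) : EuclideanSpace ℂ (Fin d) →L[ℂ] Lp ℂ 2 μ :=
  ∑ j, (EuclideanSpace.proj j).smulRight (toLpOrZero 2 μ (eCPartial z j))

lemma coeFn_eCDerivLp_apply (hμ : L2ExpMoments μ (2 * π * a)) (hz : ‖imVec z‖ < a)
    (h : EuclideanSpace ℂ (Fin d)) :
    eCDerivLp μ z h =ᵐ[μ] fun ξ => ∑ j, h j * eCPartial z j ξ := by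
  have hexpand : eCDerivLp μ z h = ∑ j, h j • toLpOrZero 2 μ (eCPartial z j) := by
    simp [eCDerivLp]
  rw [hexpand]
  filter_upwards [Lp.coeFn_fun_finsetSum Finset.univ fun j => h j • toLpOrZero 2 μ (eCPartial z j),
    ae_all_iff.2 fun j => Lp.coeFn_smul (h j) (toLpOrZero 2 μ (eCPartial z j)),
    ae_all_iff.2 fun j => coeFn_toLpOrZero (memLp_eCPartial hμ hz j)] with ξ hsum hsmul hj
  rw [hsum]
  simp only [hsmul, hj, Pi.smul_apply, smul_eq_mul]

lemma hasFDerivAt_eCLp (hμ : L2ExpMoments μ (2 * π * a)) (hz : ‖imVec z‖ < a) :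
    HasFDerivAt (eCLp μ) (eCDerivLp μ z) z := by
  obtain ⟨δ, hδ, hδa⟩ : ∃ δ, 0 < δ ∧ ‖imVec z‖ + δ < a :=
    ⟨(a - ‖imVec z‖) / 2, by linarith, by linarith⟩
  set G := fun ξ : EuclideanSpace ℝ (Fin d) =>
    ‖ξ‖ ^ 2 * Real.exp (2 * π * (‖imVec z‖ + δ) * ‖ξ‖)
  have hG : MemLp G 2 μ := hμ 2 _ (by gcongr)
  refine hasFDerivAt_of_norm_sub_sub_le_sq (C := (2 * π) ^ 2 * ‖hG.toLp G‖) hδ fun h hh => ?_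
  have hzh : ‖imVec (z + h)‖ < a := by
    rw [imVec_add]
    linarith [norm_add_le (imVec z) (imVec h), norm_imVec_le h]
  calc ‖eCLp μ (z + h) - eCLp μ z - eCDerivLp μ z h‖
      ≤ ((2 * π) ^ 2 * ‖h‖ ^ 2) * ‖hG.toLp G‖ := by
        refine Lp.norm_le_mul_norm_of_ae_le_mul ?_
        filter_upwards [Lp.coeFn_sub (eCLp μ (z + h) - eCLp μ z) (eCDerivLp μ z h),
          Lp.coeFn_sub (eCLp μ (z + h)) (eCLp μ z), coeFn_eCLp hμ hzh, coeFn_eCLp hμ hz,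
          coeFn_eCDerivLp_apply hμ hz h, hG.coeFn_toLp] with ξ hsub hsub' hEzh hEz hderiv hGξ
        rw [hsub, Pi.sub_apply, hsub', Pi.sub_apply, hEzh, hEz, hderiv, hGξ,
          Real.norm_of_nonneg (by positivity)]
        refine (norm_eC_add_sub_sub_le z h ξ).trans ?_
        rw [show (2 * π * ‖h‖ * ‖ξ‖) ^ 2 = (2 * π) ^ 2 * ‖h‖ ^ 2 * ‖ξ‖ ^ 2 by ring, mul_assoc]
        simp only [G]
        gcongr
    _ = (2 * π) ^ 2 * ‖hG.toLp G‖ * ‖h‖ ^ 2 := by ring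

end Holomorphy

theorem statement6_general {d : ℕ} (a c : ℝ)
    (uhat : EuclideanSpace ℝ (Fin d) → ℝ) (huhat_meas : Measurable uhat)
    (huhat_bd : ∀ᵐ ξ ∂volume, 0 ≤ uhat ξ ∧ uhat ξ ≤ c * Real.exp (-(4 * Real.pi * a) * ‖ξ‖)) :
    (∀ z : EuclideanSpace ℂ (Fin d), ‖imVec z‖ < a →
      MemLp (eC z) 2 (volume.withDensity fun ξ => ENNReal.ofReal (uhat ξ))) ∧
    ∃ (Φ : EuclideanSpace ℂ (Fin d) →
        Lp ℂ 2 (volume.withDensity fun ξ => ENNReal.ofReal (uhat ξ)))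
      (Φ' : EuclideanSpace ℂ (Fin d) → (EuclideanSpace ℂ (Fin d) →L[ℂ]
        Lp ℂ 2 (volume.withDensity fun ξ => ENNReal.ofReal (uhat ξ)))),
      ∀ z : EuclideanSpace ℂ (Fin d), ‖imVec z‖ < a →
        (⇑(Φ z) =ᵐ[volume.withDensity fun ξ => ENNReal.ofReal (uhat ξ)] eC z) ∧
        HasFDerivAt Φ (Φ' z) z ∧
        ∀ j : Fin d,
          ⇑(Φ' z (EuclideanSpace.single j 1))
            =ᵐ[volume.withDensity fun ξ => ENNReal.ofReal (uhat ξ)]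
          fun ξ => -(2 * Real.pi * Complex.I) * ((ξ j : ℝ) : ℂ) * eC z ξ := by
  have hμ : L2ExpMoments (volume.withDensity fun ξ => ENNReal.ofReal (uhat ξ)) (2 * π * a) :=
    l2ExpMoments_withDensity volume huhat_meas <| huhat_bd.mono fun ξ hξ => by
      rwa [show -(2 * (2 * π * a)) = -(4 * π * a) by ring]
  refine ⟨fun z hz => memLp_eC hμ hz, eCLp _, eCDerivLp _, fun z hz =>
    ⟨coeFn_eCLp hμ hz, hasFDerivAt_eCLp hμ hz, fun j => ?_⟩⟩
  filter_upwards [coeFn_eCDerivLp_apply hμ hz (EuclideanSpace.single j 1)] with ξ hξ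
  simp [hξ, eCPartial]

/-- on the strip `{|Im z| < a}`, each `e_z` lies in `L²(μ_û)`, the map
`z ↦ [e_z]` is holomorphic into `L²(μ_û)`, and its `j`-th partial derivative at `z`
is the class of `ξ ↦ -2πi ξ_j e^{-2πi z·ξ}`. -/
theorem statement6 {d : ℕ} (hd : 1 ≤ d) (a c : ℝ) (ha : 0 < a) (hc : 0 < c)
    (uhat : EuclideanSpace ℝ (Fin d) → ℝ) (huhat_meas : Measurable uhat)
    (huhat_bd : ∀ᵐ ξ ∂volume, 0 ≤ uhat ξ ∧ uhat ξ ≤ c * Real.exp (-(4 * Real.pi * a) * ‖ξ‖)) :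
    (∀ z : EuclideanSpace ℂ (Fin d), ‖imVec z‖ < a →
      MemLp (eC z) 2 (volume.withDensity fun ξ => ENNReal.ofReal (uhat ξ))) ∧
    ∃ (Φ : EuclideanSpace ℂ (Fin d) →
        Lp ℂ 2 (volume.withDensity fun ξ => ENNReal.ofReal (uhat ξ)))
      (Φ' : EuclideanSpace ℂ (Fin d) → (EuclideanSpace ℂ (Fin d) →L[ℂ]
        Lp ℂ 2 (volume.withDensity fun ξ => ENNReal.ofReal (uhat ξ)))),
      ∀ z : EuclideanSpace ℂ (Fin d), ‖imVec z‖ < a →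
        (⇑(Φ z) =ᵐ[volume.withDensity fun ξ => ENNReal.ofReal (uhat ξ)] eC z) ∧
        HasFDerivAt Φ (Φ' z) z ∧
        ∀ j : Fin d,
          ⇑(Φ' z (EuclideanSpace.single j 1))
            =ᵐ[volume.withDensity fun ξ => ENNReal.ofReal (uhat ξ)]
          fun ξ => -(2 * Real.pi * Complex.I) * ((ξ j : ℝ) : ℂ) * eC z ξ :=
  statement6_general a c uhat huhat_meas huhat_bd
end Paper
end
end

section
/- Let u : ℝ^d → ℂ be a nonzero continuously differentiable function such that u ∈ L² and u(x) → 0 as |x| → ∞. Then the complex linear span of the set of gradients {∇u(a) = (∂₁u(a), …, ∂_d u(a)) : a ∈ ℝ^d} is all of ℂ^d. -/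
/-!
If the gradients spanned a proper subspace of `ℂ^d`, a nonzero `c = α + iβ` would annihilate
all of them, i.e. `∂_α u + i ∂_β u = 0` everywhere. This is the Cauchy–Riemann equation for
`w ↦ u (a + (Re w) α + (Im w) β)`, which is therefore a bounded entire function and, by Liouville,
constant. Since one of `α, β` is nonzero, `u` is constant along a line escaping to infinity, where
`u` tends to `0`; so `u = 0`.
-/

open MeasureTheory Filter
open scoped Real ComplexOrder

noncomputable section

namespace Paper

section HolomorphicSlices

open Complex

variable {E F : Type*} [NormedAddCommGroup E] [NormedSpace ℝ E]
  [NormedAddCommGroup F] [NormedSpace ℂ F]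

theorem differentiable_comp_re_smul_add_im_smul {u : E → F} (hu : Differentiable ℝ u)
    {α β : E} (hCR : ∀ p, fderiv ℝ u p β = I • fderiv ℝ u p α) (a : E) :
    Differentiable ℂ (fun w : ℂ => u (a + w.re • α + w.im • β)) := by
  intro w
  set T : ℂ →L[ℝ] E := reCLM.smulRight α + imCLM.smulRight β
  have hT : ∀ z : ℂ, T z = z.re • α + z.im • β := fun z => by simp [T]
  set p := a + w.re • α + w.im • β
  have hslice : HasFDerivAt (fun z : ℂ => u (a + z.re • α + z.im • β))
      ((fderiv ℝ u p).comp T) w := by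
    have hline : HasFDerivAt (fun z : ℂ => a + z.re • α + z.im • β) T w := by
      simpa only [hT, add_assoc] using T.hasFDerivAt.const_add a
    exact (hu p).hasFDerivAt.comp w hline
  refine (hasFDerivAt_of_restrictScalars ℝ
    (f' := (1 : ℂ →L[ℂ] ℂ).smulRight (fderiv ℝ u p α)) hslice ?_).differentiableAt
  ext z
  simp only [ContinuousLinearMap.coe_restrictScalars', ContinuousLinearMap.smulRight_apply,
    one_apply_eq_self, ContinuousLinearMap.coe_comp, Function.comp_apply, hT,
    map_add, map_smul, hCR p]
  conv_lhs => rw [← re_add_im z]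
  rw [add_smul, mul_smul, coe_smul, coe_smul]

theorem tendsto_const_add_smul_atTop_cobounded (a : E) {γ : E} (hγ : γ ≠ 0) :
    Tendsto (fun s : ℝ => a + s • γ) atTop (Bornology.cobounded E) := by
  refine (tendsto_const_add_cobounded a).comp (tendsto_norm_atTop_iff_cobounded.mp ?_)
  simp only [norm_smul, Real.norm_eq_abs]
  exact tendsto_abs_atTop_atTop.atTop_mul_const (norm_pos_iff.mpr hγ)

theorem eq_zero_of_fderiv_eq_I_smul {u : E → F} (hu : Differentiable ℝ u)
    (hu_zero : Tendsto u (cocompact E) (nhds 0)) {α β : E} (hαβ : α ≠ 0 ∨ β ≠ 0)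
    (hCR : ∀ p, fderiv ℝ u p β = I • fderiv ℝ u p α) : u = 0 := by
  have hbdd : Bornology.IsBounded (Set.range u) :=
    ZeroAtInftyContinuousMap.isBounded_range ⟨⟨u, hu.continuous⟩, hu_zero⟩
  funext a
  have hslice (w : ℂ) : u (a + w.re • α + w.im • β) = u a := by
    simpa using (differentiable_comp_re_smul_add_im_smul hu hCR a).apply_eq_apply_of_bounded
      (hbdd.subset (Set.range_comp_subset_range _ u)) w 0
  obtain ⟨γ, hγ, hline⟩ : ∃ γ : E, γ ≠ 0 ∧ ∀ s : ℝ, u (a + s • γ) = u a := by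
    rcases hαβ with hα | hβ
    · exact ⟨α, hα, fun s => by simpa using hslice s⟩
    · exact ⟨β, hβ, fun s => by simpa using hslice (s * I)⟩
  have hlim := hu_zero.comp ((tendsto_const_add_smul_atTop_cobounded a hγ).mono_right
    Metric.cobounded_le_cocompact)
  simp only [Function.comp_def, hline] at hlim
  exact tendsto_nhds_unique tendsto_const_nhds hlim

end HolomorphicSlices

theorem exists_ne_zero_forall_dotProduct_eq_zero_of_span_ne_top {K ι : Type*} [Field K]
    [Fintype ι] [DecidableEq ι] {S : Set (ι → K)} (hS : Submodule.span K S ≠ ⊤) :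
    ∃ c ≠ 0, ∀ v ∈ S, c ⬝ᵥ v = 0 := by
  obtain ⟨φ, hφ, hker⟩ := (Submodule.span K S).exists_le_ker_of_lt_top (lt_top_iff_ne_top.2 hS)
  refine ⟨(dotProductEquiv K ι).symm φ, by simpa using hφ, fun v hv => ?_⟩
  have hφv := hker (Submodule.subset_span hv)
  rwa [LinearMap.mem_ker, ← (dotProductEquiv K ι).apply_symm_apply φ,
    dotProductEquiv_apply_apply] at hφv

theorem map_re_add_I_mul_map_im_eq_dotProduct {ι : Type*} [Fintype ι] [DecidableEq ι]
    (L : EuclideanSpace ℝ ι →L[ℝ] ℂ) (c : ι → ℂ) :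
    L (WithLp.toLp 2 fun j => (c j).re) + Complex.I * L (WithLp.toLp 2 fun j => (c j).im) =
      c ⬝ᵥ fun i => L (EuclideanSpace.single i 1) := by
  have hL (x : EuclideanSpace ℝ ι) : L x = ∑ i, x i • L (EuclideanSpace.single i 1) := by
    conv_lhs => rw [← (EuclideanSpace.basisFun ι ℝ).sum_repr x]
    simp [map_sum]
  rw [hL (WithLp.toLp 2 _), hL (WithLp.toLp 2 _)]
  simp only [dotProduct, Complex.real_smul, Finset.mul_sum, ← Finset.sum_add_distrib]
  refine Finset.sum_congr rfl fun i _ => ?_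
  conv_rhs => rw [← Complex.re_add_im (c i)]
  ring

theorem statement12_general {d : ℕ}
    (u : EuclideanSpace ℝ (Fin d) → ℂ)
    (hu_C1 : ContDiff ℝ 1 u) (hu_ne : u ≠ 0)
    (hu_zero : Tendsto u (cocompact (EuclideanSpace ℝ (Fin d))) (nhds 0)) :
    Submodule.span ℂ {v : Fin d → ℂ |
      ∃ a : EuclideanSpace ℝ (Fin d), ∀ i, v i = fderiv ℝ u a (EuclideanSpace.single i 1)} = ⊤ := by
  by_contra hspan
  obtain ⟨c, hc, hperp⟩ := exists_ne_zero_forall_dotProduct_eq_zero_of_span_ne_top hspan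
  set α : EuclideanSpace ℝ (Fin d) := WithLp.toLp 2 fun j => (c j).re
  set β : EuclideanSpace ℝ (Fin d) := WithLp.toLp 2 fun j => (c j).im
  have hCR (p) : fderiv ℝ u p β = Complex.I • fderiv ℝ u p α := by
    have h : fderiv ℝ u p α + Complex.I * fderiv ℝ u p β = 0 :=
      (map_re_add_I_mul_map_im_eq_dotProduct (fderiv ℝ u p) c).trans (hperp _ ⟨p, fun i => rfl⟩)
    linear_combination (-Complex.I) * h + fderiv ℝ u p β * Complex.I_sq
  have hαβ : α ≠ 0 ∨ β ≠ 0 := by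
    by_contra! h
    exact hc (funext fun j => Complex.ext (by simpa [α] using congr($(h.1) j))
      (by simpa [β] using congr($(h.2) j)))
  exact hu_ne (eq_zero_of_fderiv_eq_I_smul (hu_C1.differentiable one_ne_zero) hu_zero hαβ hCR)

/-- for a nonzero `C¹` function `u ∈ L²` vanishing at infinity, the
complex span of the gradient vectors `∇u(a)`, `a ∈ ℝ^d`, is all of `ℂ^d`. -/
theorem statement12 {d : ℕ} (hd : 1 ≤ d)
    (u : EuclideanSpace ℝ (Fin d) → ℂ)
    (hu_C1 : ContDiff ℝ 1 u) (hu_ne : u ≠ 0) (hu_L2 : MemLp u 2)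
    (hu_zero : Tendsto u (cocompact (EuclideanSpace ℝ (Fin d))) (nhds 0)) :
    Submodule.span ℂ {v : Fin d → ℂ |
      ∃ a : EuclideanSpace ℝ (Fin d), ∀ i, v i = fderiv ℝ u a (EuclideanSpace.single i 1)} = ⊤ :=
  statement12_general u hu_C1 hu_ne hu_zero
end Paper
end
end

section
/- Let U ⊆ ℝ^d be a nonempty open set and X ⊆ ℂ^d a connected open set containing U (via the embedding ℝ^d ⊆ ℂ^d). Let V be a Hausdorff topological vector space over ℂ that is locally convex (as a real topological vector space), and let γ : X → V be weakly holomorphic, i.e. for every continuous ℂ-linear functional λ : V → ℂ the function λ ∘ γ is holomorphic on X. If V₀ ⊆ V is a finite-dimensional ℂ-linear subspace and γ(U) ⊆ V₀, then γ(X) ⊆ V₀. -/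
open MeasureTheory Filter
open scoped Real ComplexOrder

noncomputable section

namespace Paper

/-! Separate `γ z ∉ V₀` from the closed subspace `V₀` by a continuous functional `f` vanishing on
`V₀`; then `f ∘ γ` is holomorphic on `X` and vanishes on `U`, and it suffices to show that it
vanishes on `X`. Everything reduces to the one-variable identity theorem on complex lines
`t ↦ a + t v`: with `a = Re z`, `v = Im z` the line meets `ℝ^d` in a real interval around `t = 0`,
so `f ∘ γ` vanishes on a complex ball around a point of `U` and hence near it; along lines
`t ↦ a + t (w - a)` vanishing near `a` spreads over convex open sets, and then over the connected
set `X`. -/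

open Metric Set Topology

section Holomorphic

variable {E F : Type*} [NormedAddCommGroup E] [NormedSpace ℂ E]
  [NormedAddCommGroup F] [NormedSpace ℂ F] [CompleteSpace F] {g : E → F}

theorem eq_zero_on_line_of_frequently_eq_zero {B : Set E} (hBc : Convex ℝ B) (hBo : IsOpen B)
    (hg : DifferentiableOn ℂ g B) {a v : E} (ha : a ∈ B)
    (h0 : ∃ᶠ t in 𝓝[≠] (0 : ℂ), g (a + t • v) = 0) {t : ℂ} (ht : a + t • v ∈ B) :
    g (a + t • v) = 0 := by
  set L : ℂ → E := fun t => a + t • v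
  have hLB : Convex ℝ (L ⁻¹' B) :=
    (hBc.translate_preimage_right a).linear_preimage
      ((LinearMap.toSpanSingleton ℂ E v).restrictScalars ℝ)
  have hgL : DifferentiableOn ℂ (g ∘ L) (L ⁻¹' B) :=
    hg.comp (by fun_prop) (mapsTo_preimage L B)
  have hLa : L 0 ∈ B := by simpa [L] using ha
  have hLo : IsOpen (L ⁻¹' B) := hBo.preimage (by fun_prop)
  exact (hgL.analyticOnNhd hLo).eqOn_zero_of_preconnected_of_frequently_eq_zero
    hLB.isPreconnected hLa h0 ht

theorem eqOn_zero_of_convex_of_eventuallyEq_zero {B : Set E} (hBc : Convex ℝ B)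
    (hBo : IsOpen B) (hg : DifferentiableOn ℂ g B) {a : E} (ha : a ∈ B) (h0 : g =ᶠ[𝓝 a] 0) :
    EqOn g 0 B := by
  intro w hw
  have hline : Tendsto (fun t : ℂ => a + t • (w - a)) (𝓝[≠] 0) (𝓝 a) :=
    (((continuous_id.smul continuous_const).const_add a).tendsto' 0 a (by simp)).mono_left
      nhdsWithin_le_nhds
  simpa using eq_zero_on_line_of_frequently_eq_zero hBc hBo hg ha
    (hline.eventually h0).frequently (t := 1) (by simpa using hw)

theorem eqOn_zero_of_isPreconnected_of_eventuallyEq_zero {X : Set E} (hXo : IsOpen X)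
    (hXc : IsPreconnected X) (hg : DifferentiableOn ℂ g X) {a : E} (ha : a ∈ X)
    (h0 : g =ᶠ[𝓝 a] 0) : EqOn g 0 X := by
  have hX : X ⊆ {x | g =ᶠ[𝓝 x] 0} := by
    refine hXc.subset_of_closure_inter_subset isOpen_setOfPred_eventually_nhds ⟨a, ha, h0⟩ ?_
    rintro x ⟨hx_cl, hxX⟩
    obtain ⟨ρ, hρ, hball⟩ := Metric.isOpen_iff.1 hXo x hxX
    obtain ⟨y, hy, hyx⟩ := Metric.mem_closure_iff.1 hx_cl ρ hρ
    exact eventuallyEq_of_mem (ball_mem_nhds x hρ) <|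
      eqOn_zero_of_convex_of_eventuallyEq_zero (convex_ball x ρ) isOpen_ball (hg.mono hball)
        (mem_ball'.2 hyx) hy
  exact fun x hx => (hX hx).eq_of_nhds

end Holomorphic

section RealSlice

variable {d : ℕ}

def reVec (z : EuclideanSpace ℂ (Fin d)) : EuclideanSpace ℝ (Fin d) :=
  WithLp.toLp 2 (fun j => (z j).re)

theorem RtoC_reVec_add_I_smul_RtoC_imVec (z : EuclideanSpace ℂ (Fin d)) :
    RtoC (reVec z) + Complex.I • RtoC (imVec z) = z := by
  ext j
  simpa [RtoC, reVec, imVec, mul_comm] using Complex.re_add_im (z j)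

theorem RtoC_add_smul (x y : EuclideanSpace ℝ (Fin d)) (t : ℝ) :
    RtoC (x + t • y) = RtoC x + (t : ℂ) • RtoC y := by
  ext j
  simp [RtoC]

theorem dist_RtoC (x y : EuclideanSpace ℝ (Fin d)) : dist (RtoC x) (RtoC y) = dist x y := by
  simp only [EuclideanSpace.dist_eq, RtoC, Complex.dist_eq, Real.dist_eq, ← Complex.ofReal_sub,
    Complex.norm_real, Real.norm_eq_abs]

theorem dist_reVec_le (z : EuclideanSpace ℂ (Fin d)) (x : EuclideanSpace ℝ (Fin d)) :
    dist (reVec z) x ≤ dist z (RtoC x) := by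
  rw [EuclideanSpace.dist_eq, EuclideanSpace.dist_eq]
  gcongr with j
  simpa [reVec, RtoC, Complex.dist_eq, Real.dist_eq] using Complex.abs_re_le_norm (z j - x j)

variable {F : Type*} [NormedAddCommGroup F] [NormedSpace ℂ F] [CompleteSpace F]
  {g : EuclideanSpace ℂ (Fin d) → F}

theorem eqOn_zero_ball_of_eq_zero_real {x₀ : EuclideanSpace ℝ (Fin d)} {r : ℝ}
    (hg : DifferentiableOn ℂ g (ball (RtoC x₀) r)) (h0 : ∀ x ∈ ball x₀ r, g (RtoC x) = 0) :
    EqOn g 0 (ball (RtoC x₀) r) := by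
  intro z hz
  set x := reVec z
  set y := imVec z
  have hx : x ∈ ball x₀ r := (dist_reVec_le z x₀).trans_lt hz
  have hreal : ∀ᶠ t : ℝ in 𝓝[≠] 0, g (RtoC x + (t : ℂ) • RtoC y) = 0 := by
    have hxy : Tendsto (fun t : ℝ => x + t • y) (𝓝 0) (𝓝 x) :=
      ((continuous_id.smul continuous_const).const_add x).tendsto' 0 x (by simp)
    filter_upwards [nhdsWithin_le_nhds (hxy (isOpen_ball.mem_nhds hx))] with t ht
    rw [← RtoC_add_smul]
    exact h0 _ ht
  have hofReal : Tendsto (fun t : ℝ => (t : ℂ)) (𝓝[≠] 0) (𝓝[≠] 0) := by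
    simpa using Complex.continuous_ofReal.continuousWithinAt.tendsto_nhdsWithin
      (x := (0 : ℝ)) (t := {(0 : ℂ)}ᶜ) fun t ht => by simpa using ht
  have := eq_zero_on_line_of_frequently_eq_zero (convex_ball _ r) isOpen_ball hg
    (by rwa [mem_ball, dist_RtoC]) (hofReal.frequently hreal.frequently) (t := Complex.I)
    (by rwa [RtoC_reVec_add_I_smul_RtoC_imVec])
  rwa [RtoC_reVec_add_I_smul_RtoC_imVec] at this

theorem eqOn_zero_of_eq_zero_real {X : Set (EuclideanSpace ℂ (Fin d))} (hXo : IsOpen X)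
    (hXc : IsPreconnected X) (hg : DifferentiableOn ℂ g X) {U : Set (EuclideanSpace ℝ (Fin d))}
    (hUo : IsOpen U) (hU : U.Nonempty) (hUX : ∀ x ∈ U, RtoC x ∈ X)
    (h0 : ∀ x ∈ U, g (RtoC x) = 0) : EqOn g 0 X := by
  obtain ⟨x₀, hx₀⟩ := hU
  obtain ⟨r₁, hr₁, hU₁⟩ := Metric.isOpen_iff.1 hUo x₀ hx₀
  obtain ⟨r₂, hr₂, hX₂⟩ := Metric.isOpen_iff.1 hXo _ (hUX x₀ hx₀)
  have hball : EqOn g 0 (ball (RtoC x₀) (min r₁ r₂)) :=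
    eqOn_zero_ball_of_eq_zero_real (hg.mono ((ball_subset_ball (min_le_right _ _)).trans hX₂))
      fun x hx => h0 x (hU₁ (ball_subset_ball (min_le_left _ _) hx))
  exact eqOn_zero_of_isPreconnected_of_eventuallyEq_zero hXo hXc hg (hUX x₀ hx₀)
    (eventuallyEq_of_mem (ball_mem_nhds _ (lt_min hr₁ hr₂)) hball)

end RealSlice

theorem exists_strongDual_eq_zero_on_ne_zero {𝕜 V : Type*} [RCLike 𝕜] [AddCommGroup V]
    [Module 𝕜 V] [TopologicalSpace V] [IsTopologicalAddGroup V] [ContinuousSMul 𝕜 V]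
    [Module ℝ V] [IsScalarTower ℝ 𝕜 V] [LocallyConvexSpace ℝ V]
    {p : Submodule 𝕜 V} (hp : IsClosed (p : Set V)) {x : V} (hx : x ∉ p) :
    ∃ f : StrongDual 𝕜 V, (∀ a ∈ p, f a = 0) ∧ f x ≠ 0 := by
  obtain ⟨f, u, hfp, hfx⟩ :=
    RCLike.geometric_hahn_banach_closed_point (𝕜 := 𝕜) (p.restrictScalars ℝ).convex hp hx
  have hf : ∀ a ∈ p, f a = 0 := by
    intro a ha
    by_contra hfa
    -- `(u / f a) • a ∈ p` is sent to `u`, violating the strict bound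
    simpa [hfa] using hfp (((u : 𝕜) / f a) • a) (p.smul_mem _ ha)
  refine ⟨f, hf, fun hfx₀ => ?_⟩
  have := hfp 0 p.zero_mem
  simp only [hfx₀, map_zero] at this hfx
  linarith

theorem statement14_general {d : ℕ}
    {V : Type*} [AddCommGroup V] [Module ℂ V] [TopologicalSpace V]
    [IsTopologicalAddGroup V] [ContinuousSMul ℂ V] [T2Space V]
    [Module ℝ V] [IsScalarTower ℝ ℂ V] [LocallyConvexSpace ℝ V]
    (U : Set (EuclideanSpace ℝ (Fin d))) (hU : U.Nonempty) (hUo : IsOpen U)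
    (X : Set (EuclideanSpace ℂ (Fin d))) (hXo : IsOpen X) (hXc : IsConnected X)
    (hUX : ∀ x ∈ U, RtoC x ∈ X)
    (γ : EuclideanSpace ℂ (Fin d) → V)
    (hγ : ∀ lam : V →L[ℂ] ℂ, DifferentiableOn ℂ (fun z => lam (γ z)) X)
    (V₀ : Submodule ℂ V) (hV₀ : FiniteDimensional ℂ ↥V₀)
    (hγU : ∀ x ∈ U, γ (RtoC x) ∈ V₀) :
    ∀ z ∈ X, γ z ∈ V₀ := by
  intro z hz
  by_contra hzV₀
  obtain ⟨f, hfV₀, hfz⟩ :=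
    exists_strongDual_eq_zero_on_ne_zero V₀.closed_of_finiteDimensional hzV₀
  exact hfz <| eqOn_zero_of_eq_zero_real hXo hXc.isPreconnected (hγ f) hUo hU hUX
    (fun x hx => hfV₀ _ (hγU x hx)) hz

/-- a weakly holomorphic map on a connected open `X ⊆ ℂ^d` whose values
on a nonempty open real set `U ⊆ X ∩ ℝ^d` lie in a finite-dimensional subspace `V₀`
takes all its values on `X` in `V₀`. -/
theorem statement14 {d : ℕ} (hd : 1 ≤ d)
    {V : Type*} [AddCommGroup V] [Module ℂ V] [TopologicalSpace V]
    [IsTopologicalAddGroup V] [ContinuousSMul ℂ V] [T2Space V]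
    [Module ℝ V] [IsScalarTower ℝ ℂ V] [ContinuousSMul ℝ V] [LocallyConvexSpace ℝ V]
    (U : Set (EuclideanSpace ℝ (Fin d))) (hU : U.Nonempty) (hUo : IsOpen U)
    (X : Set (EuclideanSpace ℂ (Fin d))) (hXo : IsOpen X) (hXc : IsConnected X)
    (hUX : ∀ x ∈ U, RtoC x ∈ X)
    (γ : EuclideanSpace ℂ (Fin d) → V)
    (hγ : ∀ lam : V →L[ℂ] ℂ, DifferentiableOn ℂ (fun z => lam (γ z)) X)
    (V₀ : Submodule ℂ V) (hV₀ : FiniteDimensional ℂ ↥V₀)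
    (hγU : ∀ x ∈ U, γ (RtoC x) ∈ V₀) :
    ∀ z ∈ X, γ z ∈ V₀ :=
  statement14_general U hU hUo X hXo hXc hUX γ hγ V₀ hV₀ hγU

end Paper
end
end

section
/- Let H_n denote the n-th physicists' Hermite polynomial. Then for every a ∈ ℝ and every n ∈ ℕ, ∫_ℝ H_n(x+a)² e^{−x²} dx ≤ 8ⁿ e^{2a²} ∫_ℝ H_n(x)² e^{−x²} dx. -/
/-!
Taylor's formula at `x`, together with `Hₙ' = 2n Hₙ₋₁`, gives the shift identity
`Hₙ(x + a) = ∑_{j+k=n} C(n,j) (2a)ʲ H_k(x)`. Cauchy–Schwarz over its `n + 1` terms and the norms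
`∫ H_k² e^{-x²} = 2ᵏ k! √π` (integration by parts against `H_{k+1} e^{-x²} = -(H_k e^{-x²})'`)
bound the left side by `(n + 1) ∑_j C(n,j)² (2a)^{2j} 2ᵏ k! √π`. As `C(n,j) j! k! = n!`, the `j`-th
term is `C(n,j) · (2a²)ʲ/j! · 2ⁿ n! √π ≤ C(n,j) e^{2a²} ∫ Hₙ² e^{-x²}`; summing over `j` leaves the
factor `(n + 1) 2ⁿ ≤ 8ⁿ`.
-/

open MeasureTheory Polynomial
open scoped Real

noncomputable section

namespace Paper

/-- The physicists' Hermite polynomials, via the recurrence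
`H₀ = 1`, `H_{n+1}(x) = 2x Hₙ(x) − Hₙ'(x)`
(equivalent to `Hₙ(x) = (−1)ⁿ e^{x²} (dⁿ/dxⁿ) e^{−x²}`). -/
def hermiteP : ℕ → Polynomial ℝ
  | 0 => 1
  | n + 1 => Polynomial.C 2 * Polynomial.X * hermiteP n - Polynomial.derivative (hermiteP n)

open Finset Nat

theorem hermiteP_succ (n : ℕ) :
    hermiteP (n + 1) = C 2 * X * hermiteP n - derivative (hermiteP n) := rfl

theorem natDegree_hermiteP_le (n : ℕ) : (hermiteP n).natDegree ≤ n := by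
  induction n with
  | zero => simp [hermiteP]
  | succ n ih =>
    rw [hermiteP_succ]
    refine (natDegree_sub_le _ _).trans (max_le ?_ ((natDegree_derivative_le _).trans (by omega)))
    have : (C (2 : ℝ) * X).natDegree ≤ 1 := (natDegree_C_mul_le _ _).trans natDegree_X_le
    exact natDegree_mul_le.trans (by omega)

theorem derivative_hermiteP_succ (n : ℕ) :
    derivative (hermiteP (n + 1)) = C (2 * (n + 1) : ℝ) * hermiteP n := by
  induction n with
  | zero => simp [hermiteP]
  | succ n ih =>
    rw [hermiteP_succ (n + 1), derivative_sub, derivative_mul, derivative_mul, ih, derivative_mul,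
      derivative_C, derivative_X, derivative_C, hermiteP_succ n]
    push_cast
    simp only [C_add, C_mul, C_1, C_ofNat]
    ring

theorem iterate_derivative_hermiteP (j k : ℕ) :
    derivative^[j] (hermiteP (j + k)) = C (2 ^ j * (j + k).descFactorial j : ℝ) * hermiteP k := by
  induction j with
  | zero => simp
  | succ j ih =>
    rw [Function.iterate_succ_apply, Nat.add_right_comm, derivative_hermiteP_succ,
      iterate_derivative_C_mul, ih, Nat.succ_descFactorial_succ, ← mul_assoc, ← C_mul]
    push_cast
    ring_nf

theorem hasseDeriv_hermiteP (j k : ℕ) :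
    hasseDeriv j (hermiteP (j + k)) = C ((j + k).choose j * 2 ^ j : ℝ) * hermiteP k := by
  have h := congrFun (factorial_smul_hasseDeriv (R := ℝ) (k := j)) (hermiteP (j + k))
  rw [iterate_derivative_hermiteP, descFactorial_eq_factorial_mul_choose] at h
  refine smul_right_injective ℝ[X] (factorial_ne_zero j) (h.trans ?_)
  show _ = j ! • _
  rw [nsmul_eq_mul, ← C_eq_natCast, ← mul_assoc, ← C_mul]
  push_cast
  ring_nf

theorem eval_add_eq_sum_hasseDeriv {R : Type*} [CommSemiring R] {p : R[X]} {N : ℕ}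
    (hN : p.natDegree < N) (x a : R) :
    p.eval (x + a) = ∑ j ∈ range N, (hasseDeriv j p).eval x * a ^ j := by
  rw [add_comm, ← taylor_eval, eval_eq_sum_range' (by rwa [natDegree_taylor])]
  simp only [taylor_coeff]

theorem eval_add_hermiteP (n : ℕ) (x a : ℝ) :
    (hermiteP n).eval (x + a) =
      ∑ jk ∈ antidiagonal n, n.choose jk.1 * (2 * a) ^ jk.1 * (hermiteP jk.2).eval x := by
  rw [eval_add_eq_sum_hasseDeriv (Nat.lt_succ_of_le (natDegree_hermiteP_le n)),
    ← Nat.sum_antidiagonal_eq_sum_range_succ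
      (fun j _ => (hasseDeriv j (hermiteP n)).eval x * a ^ j)]
  refine sum_congr rfl fun jk hjk => ?_
  obtain ⟨j, k⟩ := jk
  obtain rfl : j + k = n := mem_antidiagonal.mp hjk
  rw [hasseDeriv_hermiteP, eval_mul, eval_C, mul_pow]
  ring

theorem integrable_eval_mul_exp_neg_sq (p : ℝ[X]) :
    Integrable fun x : ℝ => p.eval x * Real.exp (-x ^ 2) := by
  induction p using Polynomial.induction_on' with
  | add p q hp hq => simpa only [eval_add, add_mul] using hp.fun_add hq
  | monomial k c =>
    have h := integrable_rpow_mul_exp_neg_mul_sq one_pos (s := k)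
      (by linarith [k.cast_nonneg (α := ℝ)])
    simp only [Real.rpow_natCast, neg_mul, one_mul] at h
    simpa only [eval_monomial, mul_assoc] using h.const_mul c

theorem hasDerivAt_eval_hermiteP_mul_exp (n : ℕ) (x : ℝ) :
    HasDerivAt (fun y => (hermiteP n).eval y * Real.exp (-y ^ 2))
      (-((hermiteP (n + 1)).eval x * Real.exp (-x ^ 2))) x := by
  have hexp : HasDerivAt (fun y => Real.exp (-y ^ 2)) (Real.exp (-x ^ 2) * -(2 * x)) x := by
    simpa using ((hasDerivAt_pow 2 x).neg).exp
  refine ((hermiteP n).hasDerivAt x |>.mul hexp).congr_deriv ?_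
  rw [hermiteP_succ, eval_sub, eval_mul, eval_mul, eval_C, eval_X]
  ring

theorem integral_eval_mul_hermiteP_succ (p : ℝ[X]) (n : ℕ) :
    ∫ x, p.eval x * ((hermiteP (n + 1)).eval x * Real.exp (-x ^ 2)) =
      ∫ x, (derivative p).eval x * ((hermiteP n).eval x * Real.exp (-x ^ 2)) := by
  have hibp := integral_mul_deriv_eq_deriv_mul_of_integrable
    (u := fun x => p.eval x) (v := fun x => (hermiteP n).eval x * Real.exp (-x ^ 2))
    (fun x _ => p.hasDerivAt x) (fun x _ => hasDerivAt_eval_hermiteP_mul_exp n x)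
    (by simpa [Pi.mul_def, mul_assoc] using
      (integrable_eval_mul_exp_neg_sq (p * hermiteP (n + 1))).neg)
    (by simpa [Pi.mul_def, mul_assoc] using
      integrable_eval_mul_exp_neg_sq (derivative p * hermiteP n))
    (by simpa [Pi.mul_def, mul_assoc] using integrable_eval_mul_exp_neg_sq (p * hermiteP n))
  simpa only [mul_neg, integral_neg, neg_inj] using hibp

theorem integral_hermiteP_sq (n : ℕ) :
    ∫ x, (hermiteP n).eval x ^ 2 * Real.exp (-x ^ 2) = 2 ^ n * n ! * √π := by
  induction n with
  | zero => simpa [hermiteP] using integral_gaussian 1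
  | succ n ih =>
    calc ∫ x, (hermiteP (n + 1)).eval x ^ 2 * Real.exp (-x ^ 2)
        = ∫ x, (hermiteP (n + 1)).eval x * ((hermiteP (n + 1)).eval x * Real.exp (-x ^ 2)) := by
          simp only [sq, mul_assoc]
      _ = 2 * (n + 1) * ∫ x, (hermiteP n).eval x ^ 2 * Real.exp (-x ^ 2) := by
          rw [integral_eval_mul_hermiteP_succ, derivative_hermiteP_succ, ← integral_const_mul]
          simp only [eval_mul, eval_C, sq, mul_assoc]
      _ = 2 ^ (n + 1) * (n + 1)! * √π := by
          rw [ih, factorial_succ]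
          push_cast
          ring

theorem integral_sq_sum_mul_le {ι α : Type*} [MeasurableSpace α] {μ : Measure α} (s : Finset ι)
    (f : ι → α → ℝ) {w : α → ℝ} (hw : 0 ≤ w)
    (hsum : Integrable (fun x => (∑ i ∈ s, f i x) ^ 2 * w x) μ)
    (hf : ∀ i ∈ s, Integrable (fun x => f i x ^ 2 * w x) μ) :
    ∫ x, (∑ i ∈ s, f i x) ^ 2 * w x ∂μ ≤ #s * ∑ i ∈ s, ∫ x, f i x ^ 2 * w x ∂μ := by
  rw [← integral_finsetSum s hf, ← integral_const_mul]
  refine integral_mono hsum ((integrable_finsetSum s hf).const_mul _) fun x => ?_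
  simp only [← sum_mul, ← mul_assoc]
  exact mul_le_mul_of_nonneg_right (sq_sum_le_card_mul_sum_sq ..) (hw x)

theorem sq_choose_mul_pow_mul_le (a : ℝ) (j k : ℕ) :
    ((j + k).choose j * (2 * a) ^ j) ^ 2 * (2 ^ k * k !) ≤
      (j + k).choose j * Real.exp (2 * a ^ 2) * (2 ^ (j + k) * (j + k)!) := by
  have hfact : ((j + k).choose j : ℝ) * k ! * j ! = (j + k)! := by
    have h := Nat.add_choose_mul_factorial_mul_factorial k j
    rw [add_comm k j] at h
    exact_mod_cast h
  calc ((j + k).choose j * (2 * a) ^ j) ^ 2 * (2 ^ k * k !)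
      = (j + k).choose j * ((2 * a ^ 2) ^ j / j !) * (2 ^ (j + k) * (j + k)!) := by
        rw [← hfact]
        field_simp
        ring
    _ ≤ (j + k).choose j * Real.exp (2 * a ^ 2) * (2 ^ (j + k) * (j + k)!) := by
        gcongr
        exact Real.pow_div_factorial_le_exp _ (by positivity) j

theorem integral_sq_choose_mul_hermiteP_le (a : ℝ) (j k : ℕ) :
    ∫ x, ((j + k).choose j * (2 * a) ^ j * (hermiteP k).eval x) ^ 2 * Real.exp (-x ^ 2) ≤
      (j + k).choose j * Real.exp (2 * a ^ 2) *
        ∫ x, (hermiteP (j + k)).eval x ^ 2 * Real.exp (-x ^ 2) := by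
  simp only [mul_pow _ ((hermiteP k).eval _), mul_assoc _ _ (Real.exp _), integral_const_mul,
    integral_hermiteP_sq]
  have h := mul_le_mul_of_nonneg_right (sq_choose_mul_pow_mul_le a j k) (Real.sqrt_nonneg π)
  linarith

theorem integral_eval_add_hermiteP_sq_le (a : ℝ) (n : ℕ) :
    ∫ x, (hermiteP n).eval (x + a) ^ 2 * Real.exp (-x ^ 2) ≤
      (n + 1 : ℕ) * ∑ jk ∈ antidiagonal n,
        ∫ x, (n.choose jk.1 * (2 * a) ^ jk.1 * (hermiteP jk.2).eval x) ^ 2 * Real.exp (-x ^ 2) := by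
  have hint : Integrable fun x => (hermiteP n).eval (x + a) ^ 2 * Real.exp (-x ^ 2) := by
    have h := integrable_eval_mul_exp_neg_sq (((hermiteP n).comp (X + C a)) ^ 2)
    simp only [eval_pow, eval_comp, eval_add, eval_X, eval_C] at h
    exact h
  have hint_term (c : ℝ) (k : ℕ) :
      Integrable fun x => (c * (hermiteP k).eval x) ^ 2 * Real.exp (-x ^ 2) := by
    have h := integrable_eval_mul_exp_neg_sq ((C c * hermiteP k) ^ 2)
    simp only [eval_pow, eval_mul, eval_C] at h
    exact h
  simp only [eval_add_hermiteP n] at hint ⊢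
  rw [← Nat.card_antidiagonal n]
  exact integral_sq_sum_mul_le _ _ (fun x => (Real.exp_pos _).le) hint fun jk _ => hint_term _ jk.2

/-- `∫ Hₙ(x+a)² e^{−x²} dx ≤ 8ⁿ e^{2a²} ∫ Hₙ(x)² e^{−x²} dx`. -/
theorem statement15 (a : ℝ) (n : ℕ) :
    ∫ x : ℝ, ((hermiteP n).eval (x + a)) ^ 2 * Real.exp (-x ^ 2) ≤
      8 ^ n * Real.exp (2 * a ^ 2) *
        ∫ x : ℝ, ((hermiteP n).eval x) ^ 2 * Real.exp (-x ^ 2) := by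
  set I := ∫ x, (hermiteP n).eval x ^ 2 * Real.exp (-x ^ 2)
  have hchoose : ∑ jk ∈ antidiagonal n, (n.choose jk.1 : ℝ) = 2 ^ n := by
    rw [Nat.sum_antidiagonal_eq_sum_range_succ (fun j _ => (n.choose j : ℝ))]
    exact_mod_cast Nat.sum_range_choose n
  have hcard : ((n + 1 : ℕ) : ℝ) * 2 ^ n ≤ 8 ^ n :=
    calc ((n + 1 : ℕ) : ℝ) * 2 ^ n ≤ 2 ^ n * 2 ^ n := by gcongr; exact_mod_cast n.lt_two_pow_self
      _ ≤ 8 ^ n := by rw [← mul_pow]; gcongr; norm_num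
  calc _ ≤ _ := integral_eval_add_hermiteP_sq_le a n
    _ ≤ ((n + 1 : ℕ) : ℝ) * ∑ jk ∈ antidiagonal n, n.choose jk.1 * Real.exp (2 * a ^ 2) * I := by
        gcongr with jk hjk
        obtain ⟨j, k⟩ := jk
        obtain rfl : j + k = n := mem_antidiagonal.mp hjk
        exact integral_sq_choose_mul_hermiteP_le a j k
    _ = ((n + 1 : ℕ) * 2 ^ n : ℝ) * Real.exp (2 * a ^ 2) * I := by
        rw [← sum_mul, ← sum_mul, hchoose]
        ring
    _ ≤ 8 ^ n * Real.exp (2 * a ^ 2) * I := by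
        have : 0 ≤ I := integral_nonneg fun x => by positivity
        gcongr

end Paper
end
end
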